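/- arXiv:1507.05133 — 2 statements merged into one kernel-verified Lean document; each statement's English description precedes it below -/
import Mathlib

section
/- Let α ⊆ S × S be a transition relation on a state set S, and let I, C, Safe ⊆ S. Suppose (1) C is invariant under α (for all s ∈ C and all t with (s,t) ∈ α, t ∈ C), (2) C ⊆ Safe, and (3) every state reachable from I \ C by a finite sequence of α-steps in which every intermediate and final state avoids C lies in Safe. Then every state reachable from I by finitely many α-steps lies in Safe. -/
theorem forward_invariant_cut {S : Type*} (α : S → S → Prop)
    (I C Safe : Set S)
    (hinv : ∀ s t, s ∈ C → α s t → t ∈ C)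
    (hsafe : C ⊆ Safe)
    (hrest : ∀ s ∈ I, s ∉ C →
      ∀ t, Relation.ReflTransGen (fun u v => α u v ∧ v ∉ C) s t → t ∈ Safe) :
    ∀ s ∈ I, ∀ t, Relation.ReflTransGen α s t → t ∈ Safe := by
  intro s hs t ht
  by_cases h : s ∈ C
  · -- everything reachable from C stays in C
    have : t ∈ C := by
      induction ht with
      | refl => exact h
      | tail _ hstep ih => exact hinv _ _ ih hstep
    exact hsafe this
  · have key : t ∈ C ∨ Relation.ReflTransGen (fun u v => α u v ∧ v ∉ C) s t := by
      induction ht with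
      | refl => exact Or.inr Relation.ReflTransGen.refl
      | @tail b c _ hstep ih =>
        rcases ih with hC | hr
        · exact Or.inl (hinv _ _ hC hstep)
        · by_cases hc : c ∈ C
          · exact Or.inl hc
          · exact Or.inr (hr.tail ⟨hstep, hc⟩)
    rcases key with hC | hr
    · exact hsafe hC
    · exact hrest s hs h t hr
end

section
/- Let V : ℝⁿ → ℝ be differentiable, let x : ℝ → ℝⁿ solve x' = f(x) on [0, T], and suppose B(y) = V(y) − ℓ satisfies the strict barrier condition: whenever V(y) = ℓ, ∇V(y) ⋅ f(y) < 0. If V(x(0)) < ℓ, then V(x(t)) < ℓ for all t ∈ [0, T]. -/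
theorem barrier_certificate_invariance (n : ℕ)
    (f : (Fin n → ℝ) → (Fin n → ℝ)) (hf : Continuous f)
    (V : (Fin n → ℝ) → ℝ) (hV : Differentiable ℝ V)
    (ℓ : ℝ) (T : ℝ)
    (x : ℝ → Fin n → ℝ)
    (hx : ∀ t ∈ Set.Icc (0 : ℝ) T, HasDerivAt x (f (x t)) t)
    (hbarrier : ∀ y, V y = ℓ → fderiv ℝ V y (f y) < 0)
    (h0 : V (x 0) < ℓ) :
    ∀ t ∈ Set.Icc (0 : ℝ) T, V (x t) < ℓ := by
  by_contra hcon
  push_neg at hcon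
  obtain ⟨t₀, ht₀, hℓ0⟩ := hcon
  set g : ℝ → ℝ := fun t => V (x t) with hg
  have hgd : ∀ t ∈ Set.Icc (0:ℝ) T,
      HasDerivAt g (fderiv ℝ V (x t) (f (x t))) t := fun t ht =>
    ((hV (x t)).hasFDerivAt).comp_hasDerivAt t (hx t ht)
  have hgc : ∀ t ∈ Set.Icc (0:ℝ) T, ContinuousAt g t := fun t ht =>
    (hgd t ht).continuousAt
  set S : Set ℝ := {t | t ∈ Set.Icc (0:ℝ) T ∧ ℓ ≤ g t} with hS
  have hSne : S.Nonempty := ⟨t₀, ht₀, hℓ0⟩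
  have hSbdd : BddBelow S := ⟨0, fun u hu => hu.1.1⟩
  have hSclosed : IsClosed S := by
    rw [← closure_subset_iff_isClosed]
    intro t ht
    have htT : t ∈ Set.Icc (0:ℝ) T := by
      have := closure_mono (show S ⊆ Set.Icc (0:ℝ) T from fun u hu => hu.1) ht
      rwa [closure_Icc] at this
    refine ⟨htT, ?_⟩
    have hne : (nhdsWithin t S).NeBot := mem_closure_iff_nhdsWithin_neBot.mp ht
    have htend : Filter.Tendsto g (nhdsWithin t S) (nhds (g t)) :=
      (hgc t htT).continuousWithinAt
    exact ge_of_tendsto htend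
      (Filter.eventually_of_mem self_mem_nhdsWithin (fun u hu => hu.2))
  set s := sInf S with hs
  have hsmem : s ∈ S := hSclosed.csInf_mem hSne hSbdd
  have hsIcc : s ∈ Set.Icc (0:ℝ) T := hsmem.1
  have hspos : 0 < s := by
    rcases lt_or_eq_of_le hsIcc.1 with h | h
    · exact h
    · exfalso; rw [← h] at hsmem; exact absurd hsmem.2 (not_le.mpr h0)
  have hlt : ∀ t ∈ Set.Ico (0:ℝ) s, g t < ℓ := by
    intro t ht
    by_contra hle
    push_neg at hle
    have htS : t ∈ S := ⟨⟨ht.1, le_trans (le_of_lt ht.2) hsIcc.2⟩, hle⟩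
    exact absurd (csInf_le hSbdd htS) (not_le.mpr ht.2)
  have hgs_le : g s ≤ ℓ := by
    have htend : Filter.Tendsto g (nhdsWithin s (Set.Iio s)) (nhds (g s)) :=
      ((hgc s hsIcc).continuousWithinAt)
    have hev : ∀ᶠ t in nhdsWithin s (Set.Iio s), g t ≤ ℓ := by
      have hmem : Set.Ioo (0:ℝ) s ∈ nhdsWithin s (Set.Iio s) :=
        Ioo_mem_nhdsLT_of_mem ⟨hspos, le_refl s⟩
      exact Filter.eventually_of_mem hmem
        (fun t ht => le_of_lt (hlt t ⟨le_of_lt ht.1, ht.2⟩))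
    exact le_of_tendsto htend hev
  have hgs : g s = ℓ := le_antisymm hgs_le hsmem.2
  have hd : fderiv ℝ V (x s) (f (x s)) < 0 := hbarrier (x s) hgs
  have hslope : Filter.Tendsto (slope g s) (nhdsWithin s {s}ᶜ)
      (nhds (fderiv ℝ V (x s) (f (x s)))) :=
    hasDerivAt_iff_tendsto_slope.mp (hgd s hsIcc)
  have hslope' : ∀ᶠ t in nhdsWithin s {s}ᶜ, slope g s t < 0 :=
    hslope.eventually (eventually_lt_nhds hd)
  have hslope'' : ∀ᶠ t in nhdsWithin s (Set.Iio s), slope g s t < 0 :=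
    hslope'.filter_mono (nhdsWithin_mono s (fun t ht => ne_of_lt ht))
  have hIoo : ∀ᶠ t in nhdsWithin s (Set.Iio s), t ∈ Set.Ioo (0:ℝ) s :=
    Filter.eventually_of_mem (Ioo_mem_nhdsLT_of_mem ⟨hspos, le_refl s⟩) (fun t ht => ht)
  obtain ⟨t, hst, htIoo⟩ := (hslope''.and hIoo).exists
  have htlt : g t < ℓ := hlt t ⟨le_of_lt htIoo.1, htIoo.2⟩
  have : 0 < g t - g s := by
    rw [slope_def_field] at hst
    rcases div_neg_iff.mp hst with ⟨h1, h2⟩ | ⟨h1, h2⟩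
    · linarith
    · linarith [htIoo.2]
  rw [hgs] at this
  linarith
end
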